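/- If a Markov kernel Π on a compact metric space satisfies W₁((1/m)∑_{r=0}^{m−1}νΠ^{mn+r}, ν_inv) ≤ Cλⁿ uniformly in ν, then for every α-Hölder g with E_{ν_inv}(g) = 0 the partial sums f_n^{(r)} = ∑_{k=0}^{nm+r−1} Π^k g form a uniformly Cauchy sequence: |f_p^{(r)}(x̂) − f_q^{(r)}(x̂)| ≤ mC' λ^{αp}/(1 − λ^α) for all p ≤ q and all x̂. -/

import Mathlib

open MeasureTheory

/-- The `n`-step action of a Markov kernel on measures: `ν ↦ ν Π^n`. -/
noncomputable def iterKer {X : Type*} [MeasurableSpace X] (K : X → Measure X) :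
    ℕ → Measure X → Measure X
  | 0, ν => ν
  | n + 1, ν => (iterKer K n ν).bind K

/-- Wasserstein-1 distance via couplings. -/
noncomputable def W1 {X : Type*} [MeasurableSpace X] [PseudoMetricSpace X]
    (P Q : Measure X) : ℝ :=
  sInf {r | ∃ π : Measure (X × X), π.map Prod.fst = P ∧ π.map Prod.snd = Q ∧
    r = ∫ p, dist p.1 p.2 ∂π}

/-! Split `f_q − f_p` into the blocks of `m` consecutive terms starting at the times `j m + r`,
`p ≤ j < q`. Started from `δₓ`, the `j`-th block is the `j`-th block of the chain started from
`δₓ Πʳ`, so the assumed averaged bound makes it at most `m C' λ^{α j}`; the geometric tail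
`∑_{j ≥ p} λ^{α j}` then gives the estimate. -/

theorem iterKer_add {X : Type*} [MeasurableSpace X] (K : X → Measure X) (a b : ℕ)
    (ν : Measure X) :
    iterKer K (a + b) ν = iterKer K a (iterKer K b ν) := by
  induction a with
  | zero => simp [iterKer]
  | succ a ih => rw [Nat.add_right_comm, iterKer, ih, iterKer]

theorem isProbabilityMeasure_iterKer {X : Type*} [MeasurableSpace X] {K : X → Measure X}
    (hKprob : ∀ x, IsProbabilityMeasure (K x)) (hKmeas : Measurable K)
    (n : ℕ) (ν : Measure X) [IsProbabilityMeasure ν] :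
    IsProbabilityMeasure (iterKer K n ν) := by
  induction n with
  | zero => assumption
  | succ n ih =>
    exact isProbabilityMeasure_bind hKmeas.aemeasurable (.of_forall hKprob)

theorem norm_sum_range_le_of_norm_inv_smul_le {E : Type*} [SeminormedAddCommGroup E]
    [NormedSpace ℝ E] {m : ℕ} {f : ℕ → E} {B : ℝ}
    (h : ‖(m : ℝ)⁻¹ • ∑ l ∈ Finset.range m, f l‖ ≤ B) :
    ‖∑ l ∈ Finset.range m, f l‖ ≤ m * B := by
  rcases m.eq_zero_or_pos with rfl | hm
  · simp
  · rw [norm_smul, norm_inv, Real.norm_natCast, inv_mul_le_iff₀ (Nat.cast_pos.mpr hm)] at h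
    exact h

theorem sum_range_mul_add_sub_sum_range_mul_add {M : Type*} [AddCommGroup M] (a : ℕ → M)
    (m r : ℕ) {p q : ℕ} (hpq : p ≤ q) :
    ∑ k ∈ Finset.range (q * m + r), a k - ∑ k ∈ Finset.range (p * m + r), a k
      = ∑ j ∈ Finset.Ico p q, ∑ l ∈ Finset.range m, a (j * m + r + l) := by
  rw [← Finset.sum_Ico_sub (fun n => ∑ k ∈ Finset.range (n * m + r), a k) hpq]
  refine Finset.sum_congr rfl fun j _ => ?_
  rw [show (j + 1) * m + r = j * m + r + m by ring, Finset.sum_range_add, add_sub_cancel_left]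

theorem norm_sum_range_mul_add_sub_le {E : Type*} [SeminormedAddCommGroup E] (a : ℕ → E)
    {m r : ℕ} {B x : ℝ} (hB : 0 ≤ B) (hx0 : 0 ≤ x) (hx1 : x < 1)
    (hblock : ∀ j, ‖∑ l ∈ Finset.range m, a (j * m + r + l)‖ ≤ B * x ^ j)
    {p q : ℕ} (hpq : p ≤ q) :
    ‖∑ k ∈ Finset.range (p * m + r), a k - ∑ k ∈ Finset.range (q * m + r), a k‖
      ≤ B * x ^ p / (1 - x) := by
  rw [norm_sub_rev, sum_range_mul_add_sub_sum_range_mul_add a m r hpq]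
  calc _ ≤ ∑ j ∈ Finset.Ico p q, B * x ^ j := norm_sum_le_of_le _ fun j _ => hblock j
    _ = B * ∑ j ∈ Finset.Ico p q, x ^ j := (Finset.mul_sum ..).symm
    _ ≤ B * (x ^ p / (1 - x)) := by gcongr; exact geom_sum_Ico_le_of_lt_one hx0 hx1
    _ = B * x ^ p / (1 - x) := mul_div_assoc .. |>.symm

theorem partial_sums_uniformly_cauchy_general {X : Type*} [MeasurableSpace X]
    (K : X → Measure X) (hKprob : ∀ x, IsProbabilityMeasure (K x)) (hKmeas : Measurable K)
    (m : ℕ) (lam : ℝ) (hlam0 : 0 < lam) (hlam1 : lam < 1)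
    (g : X → ℂ) (α : ℝ) (hα0 : 0 < α)
    (C' : ℝ) (hC' : 0 < C')
    (hC'bound : ∀ ν : Measure X, IsProbabilityMeasure ν → ∀ k : ℕ,
      ‖(m : ℝ)⁻¹ • ∑ l ∈ Finset.range m, ∫ x, g x ∂(iterKer K (k * m + l) ν)‖
        ≤ C' * lam ^ (α * (k : ℝ))) :
    ∀ r < m, ∀ p q : ℕ, p ≤ q → ∀ x : X,
      ‖(∑ k ∈ Finset.range (p * m + r), ∫ y, g y ∂(iterKer K k (Measure.dirac x)))
        - (∑ k ∈ Finset.range (q * m + r), ∫ y, g y ∂(iterKer K k (Measure.dirac x)))‖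
        ≤ (m : ℝ) * C' * lam ^ (α * (p : ℝ)) / (1 - lam ^ α) := by
  intro r _ p q hpq x
  have hpow (j : ℕ) : lam ^ (α * (j : ℝ)) = (lam ^ α) ^ j := by
    rw [Real.rpow_mul hlam0.le, Real.rpow_natCast]
  rw [hpow]
  refine norm_sum_range_mul_add_sub_le _ (by positivity) (by positivity)
    (Real.rpow_lt_one hlam0.le hlam1 hα0) (fun j => ?_) hpq
  have := isProbabilityMeasure_iterKer hKprob hKmeas r (Measure.dirac x)
  simp_rw [mul_assoc, ← hpow, Nat.add_right_comm _ r, iterKer_add K _ r]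
  exact norm_sum_range_le_of_norm_inv_smul_le (hC'bound _ this j)

/-- Under the uniform geometric Wasserstein convergence hypothesis, for every
`α`-Hölder `g` with `E_{ν_inv}(g) = 0`, the partial sums `f_n^{(r)} = ∑_{k < nm+r} Π^k g`
satisfy the uniform Cauchy bound `|f_p^{(r)}(x̂) − f_q^{(r)}(x̂)| ≤ m C' λ^{αp}/(1 − λ^α)`
for all `p ≤ q` and all `x̂`, where `C'` is the constant from the uniform bound
`|(1/m)∑_{l<m} νΠ^{km+l} g| ≤ C' λ^{αk}`. -/
theorem partial_sums_uniformly_cauchy {X : Type*} [MetricSpace X] [CompactSpace X]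
    [MeasurableSpace X] [BorelSpace X]
    (K : X → Measure X) (hKprob : ∀ x, IsProbabilityMeasure (K x)) (hKmeas : Measurable K)
    (νinv : Measure X) [IsProbabilityMeasure νinv]
    (m : ℕ) (hm : 1 ≤ m) (lam : ℝ) (hlam0 : 0 < lam) (hlam1 : lam < 1)
    (C : ℝ) (hC : 0 < C)
    (hW : ∀ ν : Measure X, IsProbabilityMeasure ν → ∀ n : ℕ,
      W1 (((m : ENNReal))⁻¹ • ∑ r ∈ Finset.range m, iterKer K (m * n + r) ν) νinv
        ≤ C * lam ^ n)
    (g : X → ℂ) (α Kg : ℝ) (hα0 : 0 < α) (hα1 : α ≤ 1)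
    (hg : ∀ x y, ‖g x - g y‖ ≤ Kg * dist x y ^ α)
    (hgcentered : ∫ x, g x ∂νinv = 0)
    (C' : ℝ) (hC' : 0 < C')
    (hC'bound : ∀ ν : Measure X, IsProbabilityMeasure ν → ∀ k : ℕ,
      ‖(m : ℝ)⁻¹ • ∑ l ∈ Finset.range m, ∫ x, g x ∂(iterKer K (k * m + l) ν)‖
        ≤ C' * lam ^ (α * (k : ℝ))) :
    ∀ r < m, ∀ p q : ℕ, p ≤ q → ∀ x : X,
      ‖(∑ k ∈ Finset.range (p * m + r), ∫ y, g y ∂(iterKer K k (Measure.dirac x)))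
        - (∑ k ∈ Finset.range (q * m + r), ∫ y, g y ∂(iterKer K k (Measure.dirac x)))‖
        ≤ (m : ℝ) * C' * lam ^ (α * (p : ℝ)) / (1 - lam ^ α) :=
  partial_sums_uniformly_cauchy_general K hKprob hKmeas m lam hlam0 hlam1 g α hα0 C' hC' hC'bound
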